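/- Let a < b, let y : [a,b] → [0,∞) be absolutely continuous, and let z, g, h : (a,b) → [0,∞) be integrable functions such that y'(t) + z(t) ≤ g(t) y(t) + h(t) for almost every t ∈ (a,b). Then y(b) + ∫_a^b z(t) dt ≤ ( y(a) + ∫_a^b h(t) dt ) · exp( ∫_a^b g(t) dt ). -/

import Mathlib

open MeasureTheory Set Filter Real
open scoped NNReal

/-!
With `G t = ∫ₐᵗ g ≥ 0`, an absolutely continuous `u` with `u' ≤ g u + h` satisfies
`(u e^{-G})' = (u' - g u) e^{-G} ≤ h` a.e., and integrating by parts on `[a, b]` gives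
`u(b) e^{-G(b)} ≤ u(a) + ∫ h`. The theorem is the case `u = y + ∫ₐᵗ z`, where `z ≥ 0`
turns `y' + z ≤ g y + h` into `u' ≤ g u + h`.
-/

theorem LipschitzOnWith.comp_absolutelyContinuousOnInterval {X Y : Type*} [PseudoMetricSpace X]
    [PseudoMetricSpace Y] {φ : X → Y} {K : ℝ≥0} {s : Set X} {f : ℝ → X} {a b : ℝ}
    (hφ : LipschitzOnWith K φ s) (hf : AbsolutelyContinuousOnInterval f a b)
    (hfs : MapsTo f (uIcc a b) s) : AbsolutelyContinuousOnInterval (φ ∘ f) a b := by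
  unfold AbsolutelyContinuousOnInterval at hf ⊢
  have hK := hf.const_mul (K : ℝ)
  rw [mul_zero] at hK
  refine squeeze_zero'
    (Eventually.of_forall fun _ ↦ Finset.sum_nonneg fun _ _ ↦ dist_nonneg) ?_ hK
  filter_upwards [mem_inf_of_right (mem_principal_self _)] with E hE
  rw [Finset.mul_sum]
  exact Finset.sum_le_sum fun i hi ↦
    hφ.dist_le_mul _ (hfs (hE.1 i hi).1) _ (hfs (hE.1 i hi).2)

theorem lipschitzOnWith_exp_neg_Ici : LipschitzOnWith 1 (fun x ↦ exp (-x)) (Ici 0) := by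
  refine (convex_Ici 0).lipschitzOnWith_of_nnnorm_hasDerivWithin_le
    (fun x _ ↦ (hasDerivAt_neg x).exp.hasDerivWithinAt) fun x hx ↦ ?_
  rw [← NNReal.coe_le_coe, coe_nnnorm, NNReal.coe_one, Real.norm_eq_abs, abs_mul, abs_neg,
    abs_one, mul_one, abs_of_pos (exp_pos _), exp_le_one_iff, neg_nonpos]
  exact hx

theorem AbsolutelyContinuousOnInterval.le_mul_exp_integral_of_deriv_le
    {u g h : ℝ → ℝ} {a b : ℝ} (hab : a ≤ b) (hu : AbsolutelyContinuousOnInterval u a b)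
    (hg : IntervalIntegrable g volume a b) (hh : IntervalIntegrable h volume a b)
    (hg₀ : 0 ≤ᵐ[volume.restrict (Icc a b)] g) (hh₀ : 0 ≤ᵐ[volume.restrict (Icc a b)] h)
    (hu' : ∀ᵐ t ∂volume.restrict (Icc a b), deriv u t ≤ g t * u t + h t) :
    u b ≤ (u a + ∫ t in a..b, h t) * exp (∫ t in a..b, g t) := by
  set G : ℝ → ℝ := fun t ↦ ∫ s in a..t, g s
  set E : ℝ → ℝ := fun t ↦ exp (-G t)
  have hG₀ : ∀ t ∈ Icc a b, 0 ≤ G t := fun t ht ↦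
    intervalIntegral.integral_nonneg_of_ae_restrict ht.1
      (ae_restrict_of_ae_restrict_of_subset (Icc_subset_Icc_right ht.2) hg₀)
  have hE : AbsolutelyContinuousOnInterval E a b :=
    lipschitzOnWith_exp_neg_Ici.comp_absolutelyContinuousOnInterval
      (hg.absolutelyContinuousOnInterval_intervalIntegral left_mem_uIcc)
      fun t ht ↦ hG₀ t (uIcc_of_le hab ▸ ht)
  have hE' : ∀ᵐ t ∂volume.restrict (Icc a b), deriv E t = -(g t * E t) := by
    rw [ae_restrict_iff' measurableSet_Icc]
    filter_upwards [hg.ae_hasDerivAt_integral] with t hG' ht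
    have ht' : t ∈ uIcc a b := uIcc_of_le hab ▸ ht
    rw [((hG' ht' a left_mem_uIcc).fun_neg.exp).deriv]
    ring
  have hint : IntervalIntegrable (fun t ↦ deriv u t * E t + u t * deriv E t) volume a b :=
    (hu.intervalIntegrable_deriv.mul_continuousOn hE.continuousOn).add
      (hE.intervalIntegrable_deriv.continuousOn_mul hu.continuousOn)
  have hparts : u b * E b - u a ≤ ∫ t in a..b, h t := by
    have hEa : E a = 1 := by simp [E, G]
    rw [← mul_one (u a), ← hEa, ← hu.integral_deriv_mul_eq_sub hE]
    refine intervalIntegral.integral_mono_ae_restrict hab hint hh ?_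
    filter_upwards [hu', hE', hh₀, ae_restrict_mem measurableSet_Icc] with t hut hEt hht ht
    have hE1 : E t ≤ 1 := exp_le_one_iff.2 (neg_nonpos.2 (hG₀ t ht))
    calc deriv u t * E t + u t * deriv E t = (deriv u t - g t * u t) * E t := by rw [hEt]; ring
      _ ≤ h t * E t := mul_le_mul_of_nonneg_right (by linarith) (exp_nonneg _)
      _ ≤ h t := mul_le_of_le_one_right hht hE1
  calc u b = u b * E b * exp (G b) := by simp [E, mul_assoc, ← exp_add]
    _ ≤ (u a + ∫ t in a..b, h t) * exp (G b) := by gcongr; linarith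

theorem add_integral_le_mul_exp_integral_of_le {f g h : ℝ → ℝ} {a b c : ℝ} (hab : a ≤ b)
    (hf : IntervalIntegrable f volume a b) (hg : IntervalIntegrable g volume a b)
    (hh : IntervalIntegrable h volume a b) (hg₀ : 0 ≤ᵐ[volume.restrict (Icc a b)] g)
    (hh₀ : 0 ≤ᵐ[volume.restrict (Icc a b)] h)
    (hfgh : ∀ᵐ t ∂volume.restrict (Icc a b), f t ≤ g t * (c + ∫ s in a..t, f s) + h t) :
    c + ∫ t in a..b, f t ≤ (c + ∫ t in a..b, h t) * exp (∫ t in a..b, g t) := by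
  have hF : AbsolutelyContinuousOnInterval (fun t ↦ c + ∫ s in a..t, f s) a b :=
    (LipschitzWith.const c).lipschitzOnWith.absolutelyContinuousOnInterval.add
      (hf.absolutelyContinuousOnInterval_intervalIntegral left_mem_uIcc)
  have hF' : ∀ᵐ t ∂volume.restrict (Icc a b),
      deriv (fun t ↦ c + ∫ s in a..t, f s) t = f t := by
    rw [ae_restrict_iff' measurableSet_Icc]
    filter_upwards [hf.ae_hasDerivAt_integral] with t hft ht
    exact ((hft (uIcc_of_le hab ▸ ht) a left_mem_uIcc).const_add c).deriv
  simpa using hF.le_mul_exp_integral_of_deriv_le hab hg hh hg₀ hh₀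
    (by filter_upwards [hF', hfgh] with t hFt hft using hFt ▸ hft)

theorem gronwall_inequality_with_dissipation_general
    (a b : ℝ) (hab : a < b) (y y' z g h : ℝ → ℝ)
    (hy'_int : IntegrableOn y' (Ioo a b))
    (hy_ac : ∀ t ∈ Icc a b, y t = y a + ∫ s in Ioo a t, y' s)
    (hz_nonneg : ∀ t ∈ Ioo a b, 0 ≤ z t) (hz_int : IntegrableOn z (Ioo a b))
    (hg_nonneg : ∀ t ∈ Ioo a b, 0 ≤ g t) (hg_int : IntegrableOn g (Ioo a b))
    (hh_nonneg : ∀ t ∈ Ioo a b, 0 ≤ h t) (hh_int : IntegrableOn h (Ioo a b))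
    (hineq : ∀ᵐ t ∂(volume.restrict (Ioo a b)), y' t + z t ≤ g t * y t + h t) :
    y b + ∫ t in Ioo a b, z t
      ≤ (y a + ∫ t in Ioo a b, h t) * Real.exp (∫ t in Ioo a b, g t) := by
  have hIoo : ∀ {f : ℝ → ℝ} {t}, a ≤ t → ∫ s in a..t, f s = ∫ s in Ioo a t, f s :=
    fun ht ↦ by rw [intervalIntegral.integral_of_le ht, integral_Ioc_eq_integral_Ioo]
  have hInt : ∀ {f : ℝ → ℝ}, IntegrableOn f (Ioo a b) → IntervalIntegrable f volume a b :=
    (intervalIntegrable_iff_integrableOn_Ioo_of_le hab.le).2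
  have hIcc_Ioo : volume.restrict (Icc a b) = volume.restrict (Ioo a b) :=
    Measure.restrict_congr_set Ioo_ae_eq_Icc.symm
  have hy : ∀ t ∈ Icc a b, y a + ∫ s in a..t, (y' s + z s) = y t + ∫ s in Ioo a t, z s := by
    intro t ht
    have hsub : uIcc a t ⊆ uIcc a b := uIcc_subset_uIcc_left (uIcc_of_le hab.le ▸ ht)
    rw [hy_ac t ht, ← hIoo ht.1, ← hIoo ht.1, add_assoc,
      intervalIntegral.integral_add ((hInt hy'_int).mono_set hsub) ((hInt hz_int).mono_set hsub)]
  have hineq' : ∀ᵐ t ∂volume.restrict (Icc a b),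
      y' t + z t ≤ g t * (y a + ∫ s in a..t, (y' s + z s)) + h t := by
    rw [hIcc_Ioo]
    filter_upwards [hineq, ae_restrict_mem measurableSet_Ioo] with t hyt ht
    have hz : 0 ≤ ∫ s in Ioo a t, z s := setIntegral_nonneg measurableSet_Ioo
      fun s hs ↦ hz_nonneg s ⟨hs.1, hs.2.trans ht.2⟩
    rw [hy t (Ioo_subset_Icc_self ht)]
    linarith [mul_nonneg (hg_nonneg t ht) hz]
  have hnonneg : ∀ {f : ℝ → ℝ}, (∀ t ∈ Ioo a b, 0 ≤ f t) →
      0 ≤ᵐ[volume.restrict (Icc a b)] f :=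
    fun hf ↦ hIcc_Ioo ▸ (ae_restrict_iff' measurableSet_Ioo).2 (.of_forall hf)
  have key := add_integral_le_mul_exp_integral_of_le hab.le
    ((hInt hy'_int).add (hInt hz_int)) (hInt hg_int) (hInt hh_int)
    (hnonneg hg_nonneg) (hnonneg hh_nonneg) hineq'
  rwa [hy b (right_mem_Icc.2 hab.le), hIoo hab.le, hIoo hab.le] at key

/-- A Gronwall-type inequality: if `y : [a,b] → [0,∞)` is absolutely
continuous (encoded by the integral representation `y t = y a + ∫_a^t y'`
with `y'` integrable, `y'` being the a.e. derivative of `y`), the functions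
`z, g, h : (a,b) → [0,∞)` are integrable, and
`y'(t) + z(t) ≤ g(t) y(t) + h(t)` for a.e. `t ∈ (a,b)`, then
`y(b) + ∫_a^b z ≤ (y(a) + ∫_a^b h) · exp(∫_a^b g)`. -/
theorem gronwall_inequality_with_dissipation
    (a b : ℝ) (hab : a < b) (y y' z g h : ℝ → ℝ)
    (hy_nonneg : ∀ t ∈ Icc a b, 0 ≤ y t)
    (hy'_int : IntegrableOn y' (Ioo a b))
    (hy_ac : ∀ t ∈ Icc a b, y t = y a + ∫ s in Ioo a t, y' s)
    (hz_nonneg : ∀ t ∈ Ioo a b, 0 ≤ z t) (hz_int : IntegrableOn z (Ioo a b))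
    (hg_nonneg : ∀ t ∈ Ioo a b, 0 ≤ g t) (hg_int : IntegrableOn g (Ioo a b))
    (hh_nonneg : ∀ t ∈ Ioo a b, 0 ≤ h t) (hh_int : IntegrableOn h (Ioo a b))
    (hineq : ∀ᵐ t ∂(volume.restrict (Ioo a b)), y' t + z t ≤ g t * y t + h t) :
    y b + ∫ t in Ioo a b, z t
      ≤ (y a + ∫ t in Ioo a b, h t) * Real.exp (∫ t in Ioo a b, g t) :=
  gronwall_inequality_with_dissipation_general a b hab y y' z g h hy'_int hy_ac hz_nonneg hz_int
    hg_nonneg hg_int hh_nonneg hh_int hineq
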